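/- The normalization constant of the Turaev–Viro state sum is independent of the color. Let r ≥ 2 be an integer. For every color m_a (an integer with 0 ≤ m_a ≤ r−2): Σ Δ_{m_b} · Δ_{m_c} = Δ_{m_a} · r / (2·sin²(π/r)), where the sum runs over all pairs of colors (m_b, m_c) such that the triple (m_a, m_b, m_c) is admissible. In particular, the quantity Δ := Δ_{m_a}^{-1} · Σ_{(m_b,m_c) admissible} Δ_{m_b} Δ_{m_c} is independent of the color m_a. -/

import Mathlib

/-!
Put `θ = π/r`, so that `Δ_m = (-1)^m sin((m+1)θ) / sin θ`. For fixed colors `a, b` the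
admissible `c` form the arithmetic progression `|a-b|, |a-b|+2, …, min(a+b, 2r-4-a-b)`, and
the sum of `sin((c+1)θ)` over it telescopes to a difference of cosines; since
`cos((2r-x)θ) = cos(xθ)`, the truncation at `2r-4-a-b` gives the same value as the untruncated
sum, and the product-to-sum formula yields the fusion rule `Σ_c Δ_c = Δ_a Δ_b`. Hence the state
sum equals `Δ_a Σ_b Δ_b²`, and `Σ_b sin²((b+1)θ) = r/2` by one more telescoping sum of cosines.
-/

open Real

/-- The quantity `Δ_m = (−1)^m [m+1]_q = (−1)^m sin((m+1)π/r)/sin(π/r)` attached to a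
color `m` at level `r`. -/
noncomputable def quantumDelta (r m : ℕ) : ℝ :=
  (-1 : ℝ) ^ m * Real.sin ((m + 1) * π / r) / Real.sin (π / r)

/-- A triple of colors `(a, b, c)` at level `r` is admissible if
`|a − b| ≤ c ≤ min(a + b, 2(r−2) − a − b)` and `a + b + c` is even. -/
def QAdmissible (r a b c : ℕ) : Prop :=
  a ≤ b + c ∧ b ≤ a + c ∧ c ≤ a + b ∧ a + b + c ≤ 2 * (r - 2) ∧ Even (a + b + c)

instance (r a b c : ℕ) : Decidable (QAdmissible r a b c) := by
  unfold QAdmissible; infer_instance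

open Finset

lemma two_sin_mul_sum_range_sin (x θ : ℝ) (N : ℕ) :
    2 * sin θ * ∑ k ∈ range N, sin (x + (2 * k + 1) * θ) = cos x - cos (x + 2 * N * θ) := by
  induction N with
  | zero => simp
  | succ n ih =>
    have h := two_mul_sin_mul_sin (x + (2 * n + 1) * θ) θ
    rw [sum_range_succ, mul_add, ih]
    push_cast
    ring_nf at h ⊢
    linarith

lemma sin_pi_div_pos {n : ℕ} (hn : 2 ≤ n) : 0 < sin (π / n) := by
  have hn' : (2 : ℝ) ≤ n := by exact_mod_cast hn
  apply sin_pos_of_pos_of_lt_pi (by positivity)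
  rw [div_lt_iff₀ (by positivity)]
  nlinarith [pi_pos]

lemma sum_range_cos_two_mul_pi_div {n : ℕ} (hn : 2 ≤ n) :
    ∑ k ∈ range (n - 1), cos (2 * ((k + 1) * π / n)) = -1 := by
  have hs := sin_pi_div_pos hn
  have hn0 : (n : ℝ) ≠ 0 := by positivity
  have h := two_sin_mul_sum_range_sin (π / n - π / 2) (π / n) (n - 1)
  have hterm : ∀ k : ℕ,
      sin (π / n - π / 2 + (2 * k + 1) * (π / n)) = -cos (2 * ((k + 1) * π / n)) := by
    intro k
    rw [← sin_sub_pi_div_two]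
    ring_nf
  have hend :
      π / n - π / 2 + 2 * ((n - 1 : ℕ) : ℝ) * (π / n) = 2 * π - (π / n + π / 2) := by
    rw [Nat.cast_sub (by omega)]
    field_simp
    ring
  simp only [hterm, sum_neg_distrib, hend, cos_two_pi_sub, cos_add_pi_div_two,
    cos_sub_pi_div_two] at h
  nlinarith

lemma sum_range_sin_sq_mul_pi_div {n : ℕ} (hn : 2 ≤ n) :
    ∑ k ∈ range (n - 1), sin ((k + 1) * π / n) ^ 2 = n / 2 := by
  simp only [sin_sq_eq_half_sub, sum_sub_distrib, ← sum_div, sum_range_cos_two_mul_pi_div hn,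
    sum_const, card_range, nsmul_eq_mul, Nat.cast_sub (by omega : 1 ≤ n)]
  ring

lemma filter_qAdmissible_eq_image {r a b : ℕ} (hr : 2 ≤ r) (ha : a ≤ r - 2)
    (hb : b ≤ r - 2) :
    (range (r - 1)).filter (QAdmissible r a b) =
      (range ((min (a + b) (2 * (r - 2) - (a + b)) - ((a : ℤ) - b).natAbs) / 2 + 1)).image
        (fun k => ((a : ℤ) - b).natAbs + 2 * k) := by
  ext c
  simp only [mem_filter, mem_range, mem_image, QAdmissible, Nat.even_iff]
  constructor
  · rintro ⟨-, h⟩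
    exact ⟨(c - ((a : ℤ) - b).natAbs) / 2, by omega, by omega⟩
  · rintro ⟨k, hk, rfl⟩
    omega

lemma cos_two_mul_sub_mul_pi_div {r n : ℕ} (hr : r ≠ 0) (hn : n ≤ 2 * r) :
    cos ((2 * r - n : ℕ) * (π / r)) = cos (n * (π / r)) := by
  rw [Nat.cast_sub hn, ← cos_two_pi_sub]
  congr 1
  field_simp
  push_cast
  ring

lemma two_sin_mul_sum_filter_qAdmissible {r a b : ℕ} (hr : 2 ≤ r) (ha : a ≤ r - 2)
    (hb : b ≤ r - 2) :
    2 * sin (π / r) * ∑ c ∈ (range (r - 1)).filter (QAdmissible r a b),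
        (-1 : ℝ) ^ c * sin ((c + 1) * π / r) =
      (-1 : ℝ) ^ (a + b) * (2 * sin ((a + 1) * π / r) * sin ((b + 1) * π / r)) := by
  rw [filter_qAdmissible_eq_image hr ha hb, sum_image (fun _ _ _ _ h => by omega)]
  set A := ((a : ℤ) - b).natAbs with hA
  set B := min (a + b) (2 * (r - 2) - (a + b))
  have hsign : ∀ k : ℕ, (-1 : ℝ) ^ (A + 2 * k) = (-1) ^ (a + b) := by
    intro k
    rw [neg_one_pow_eq_pow_mod_two, neg_one_pow_eq_pow_mod_two (a + b)]
    congr 1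
    omega
  have harg : ∀ k : ℕ,
      ((A + 2 * k : ℕ) + 1 : ℝ) * π / r = A * (π / r) + (2 * k + 1) * (π / r) := by
    intro k
    push_cast
    ring
  simp only [hsign, harg, ← mul_sum, mul_left_comm _ ((-1 : ℝ) ^ (a + b)),
    two_sin_mul_sum_range_sin]
  congr 1
  have hend :
      (A : ℝ) * (π / r) + 2 * (((B - A) / 2 + 1 : ℕ) : ℝ) * (π / r) =
        (B + 2 : ℕ) * (π / r) := by
    rw [← add_mul]
    congr 1
    exact_mod_cast (show A + 2 * ((B - A) / 2 + 1) = B + 2 by omega)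
  have hcosA : cos (A * (π / r)) = cos ((a - b : ℝ) * (π / r)) := by
    rw [← cos_abs ((a - b : ℝ) * _), abs_mul, abs_of_pos (by positivity : 0 < π / r), hA,
      Nat.cast_natAbs]
    push_cast
    rfl
  have hcosB : cos ((B + 2 : ℕ) * (π / r)) = cos ((a + b + 2 : ℕ) * (π / r)) := by
    rcases le_total (a + b) (2 * (r - 2) - (a + b)) with h | h
    · rw [show B = a + b from min_eq_left h]
    · rw [show B + 2 = 2 * r - (a + b + 2) by omega,
        cos_two_mul_sub_mul_pi_div (by omega) (by omega)]
  rw [hend, hcosB, hcosA, two_mul_sin_mul_sin]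
  push_cast
  ring_nf

lemma sum_filter_qAdmissible_quantumDelta {r a b : ℕ} (hr : 2 ≤ r) (ha : a ≤ r - 2)
    (hb : b ≤ r - 2) :
    ∑ c ∈ (range (r - 1)).filter (QAdmissible r a b), quantumDelta r c =
      quantumDelta r a * quantumDelta r b := by
  have hs : 2 * sin (π / r) ≠ 0 := by have := sin_pi_div_pos hr; positivity
  apply mul_left_cancel₀ hs
  simp only [quantumDelta, ← sum_div, mul_div_assoc', two_sin_mul_sum_filter_qAdmissible hr ha hb]
  field_simp
  ring

lemma sum_range_quantumDelta_sq {r : ℕ} (hr : 2 ≤ r) :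
    ∑ b ∈ range (r - 1), quantumDelta r b ^ 2 = r / (2 * sin (π / r) ^ 2) := by
  have hsign : ∀ b : ℕ, ((-1 : ℝ) ^ b) ^ 2 = 1 := fun b => by
    rw [pow_right_comm, neg_one_sq, one_pow]
  simp only [quantumDelta, div_pow, mul_pow, hsign, one_mul, ← sum_div,
    sum_range_sin_sq_mul_pi_div hr]
  ring

theorem quantum_normalization_constant (r : ℕ) (hr : 2 ≤ r) (ma : ℕ) (hma : ma ≤ r - 2) :
    ∑ p ∈ (Finset.range (r - 1) ×ˢ Finset.range (r - 1)).filter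
        (fun p => QAdmissible r ma p.1 p.2),
      quantumDelta r p.1 * quantumDelta r p.2 =
    quantumDelta r ma * r / (2 * Real.sin (π / r) ^ 2) := by
  rw [sum_filter, sum_product]
  calc ∑ b ∈ range (r - 1), ∑ c ∈ range (r - 1),
        (if QAdmissible r ma b c then quantumDelta r b * quantumDelta r c else 0)
      = ∑ b ∈ range (r - 1),
          quantumDelta r b *
            ∑ c ∈ (range (r - 1)).filter (QAdmissible r ma b), quantumDelta r c := by
        simp only [mul_sum, sum_filter, mul_ite, mul_zero]
    _ = ∑ b ∈ range (r - 1), quantumDelta r ma * quantumDelta r b ^ 2 := by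
        refine sum_congr rfl fun b hb => ?_
        rw [sum_filter_qAdmissible_quantumDelta hr hma (by rw [mem_range] at hb; omega)]
        ring
    _ = quantumDelta r ma * r / (2 * sin (π / r) ^ 2) := by
        rw [← mul_sum, sum_range_quantumDelta_sq hr, mul_div_assoc]
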